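/- arXiv:2212.09294 — 5 statements merged into one kernel-verified Lean document; each statement's English description precedes it below -/
import Mathlib

section
/- The partial derivative of Φ(α,x) = −2 (log α)(log x) − Li₂(α²x) + Li₂(α²/x) with respect to α satisfies exp(α·∂Φ/∂α) = (1−α²x)²(x−α²)⁻², on a domain where the relevant functions are holomorphic. -/
/-! Since `Li₂'(z) = -log(1 - z)/z`, the chain rule gives `α · ∂/∂α Li₂(α²c) = -2 log(1 - α²c)`
for every constant `c`. Hence `α · ∂Φ/∂α = 2 (log(1 - α²x) - log x - log(1 - α²/x))`, and its
exponential is `((1 - α²x) / (x (1 - α²/x)))² = ((1 - α²x) / (x - α²))²`. -/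

open Complex

theorem hasDerivAt_dilog_comp_sq_mul {Li2 : ℂ → ℂ} {α c : ℂ} (hα : α ≠ 0) (hc : c ≠ 0)
    (hLi : HasDerivAt Li2 (-log (1 - α ^ 2 * c) / (α ^ 2 * c)) (α ^ 2 * c)) :
    HasDerivAt (fun a : ℂ => Li2 (a ^ 2 * c)) (-2 * log (1 - α ^ 2 * c) / α) α := by
  have hsq : HasDerivAt (fun a : ℂ => a ^ 2 * c) (2 * α * c) α := by
    simpa using (hasDerivAt_pow 2 α).mul_const c
  refine (hLi.comp α hsq).congr_deriv ?_
  field_simp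

theorem hasDerivAt_neg_two_mul_log_mul_const {α : ℂ} (hα : α ∈ slitPlane) (L : ℂ) :
    HasDerivAt (fun a : ℂ => -2 * log a * L) (-2 * L / α) α := by
  refine (((hasDerivAt_log hα).const_mul (-2 : ℂ)).mul_const L).congr_deriv ?_
  ring

theorem exp_two_mul_log_sub_log_sub_log {u v w : ℂ} (hu : u ≠ 0) (hv : v ≠ 0) (hw : w ≠ 0) :
    exp (2 * (log u - log v - log w)) = (u / (v * w)) ^ 2 := by
  rw [two_mul, exp_add, ← sq, exp_sub, exp_sub, exp_log hu, exp_log hv, exp_log hw, div_div]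

/-- for the potential function
`Φ(α,x) = −2 log α · log x − Li₂(α²x) + Li₂(α²/x)` of the figure-eight knot,
one has `exp(α · ∂Φ/∂α) = (1−α²x)²(x−α²)⁻²`, where `Li₂` is any function with
the dilogarithm derivative `Li₂'(z) = −log(1−z)/z` at the relevant points. -/
theorem figure_eight_potential_alpha_derivative (Li2 : ℂ → ℂ) (α x : ℂ)
    (hα : α ≠ 0) (hx : x ≠ 0) (hα' : α ∈ Complex.slitPlane)
    (h1 : 1 - α ^ 2 * x ≠ 0) (h2 : x - α ^ 2 ≠ 0)
    (hLi1 : HasDerivAt Li2 (-Complex.log (1 - α ^ 2 * x) / (α ^ 2 * x)) (α ^ 2 * x))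
    (hLi2 : HasDerivAt Li2 (-Complex.log (1 - α ^ 2 / x) / (α ^ 2 / x)) (α ^ 2 / x)) :
    ∃ d : ℂ,
      HasDerivAt
        (fun a : ℂ =>
          -2 * Complex.log a * Complex.log x - Li2 (a ^ 2 * x) + Li2 (a ^ 2 / x)) d α ∧
      Complex.exp (α * d) = (1 - α ^ 2 * x) ^ 2 * (x - α ^ 2)⁻¹ ^ 2 := by
  have hdiv : 1 - α ^ 2 / x = (x - α ^ 2) / x := by field_simp
  have hLi2' := hasDerivAt_dilog_comp_sq_mul hα (inv_ne_zero hx)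
    (by simpa only [div_eq_mul_inv] using hLi2)
  simp only [← div_eq_mul_inv] at hLi2'
  refine ⟨_, ((hasDerivAt_neg_two_mul_log_mul_const hα' (log x)).sub
    (hasDerivAt_dilog_comp_sq_mul hα hx hLi1)).add hLi2', ?_⟩
  have hαd : α * (-2 * log x / α - -2 * log (1 - α ^ 2 * x) / α + -2 * log (1 - α ^ 2 / x) / α)
      = 2 * (log (1 - α ^ 2 * x) - log x - log (1 - α ^ 2 / x)) := by
    field_simp
    ring
  rw [hαd, exp_two_mul_log_sub_log_sub_log h1 hx (hdiv ▸ div_ne_zero h2 hx), hdiv,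
    mul_div_cancel₀ _ hx, div_eq_mul_inv, mul_pow]
end

section
/- In the Ore algebra ℚ(q,Q)[E] with commutation relation EQ = qQE, the operator X(q,E,Q) = (qQ/(1−q³Q²))E² + (1/(1−q³Q²) + 1/(1−qQ²) − 1)E + qQ/(1−qQ²) admits the two factorizations X = ((qQ/(1−q³Q²))E + 1/(1−qQ²))(E + qQ) and X = ((1/(1−q³Q²))E + qQ/(1−qQ²))(1 + QE). -/
/-!
Both factorizations are instances of the Ore product rule
`(a E + b)(c E + d) = a σ(c) E² + (a σ(d) + b c) E + b d`, with `σ(Q) = q Q`.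
The coefficients `q, Q, u = 1/(1 - q³Q²), v = 1/(1 - qQ²)` commute, and the only
non-trivial coefficient identities are `q³Q² u = u - 1` and `q Q² v = v - 1`.
-/

theorem mul_invOf_one_sub {R : Type*} [Ring R] (a : R) [Invertible (1 - a)] :
    a * ⅟(1 - a) = ⅟(1 - a) - 1 :=
  calc a * ⅟(1 - a) = ⅟(1 - a) - (1 - a) * ⅟(1 - a) := by
        rw [sub_mul, one_mul, sub_sub_cancel]
    _ = ⅟(1 - a) - 1 := by rw [mul_invOf_self]

theorem linear_mul_linear_of_skew {R : Type*} [Ring R] {E a b c d c' d' : R}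
    (hc : E * c = c' * E) (hd : E * d = d' * E) :
    (a * E + b) * (c * E + d) = a * c' * E ^ 2 + (a * d' + b * c) * E + b * d := by
  have hcE : E * (c * E) = c' * (E * E) := by rw [← mul_assoc, hc, mul_assoc]
  simp only [add_mul, mul_add, mul_assoc, hcE, hd, sq]
  abel

section OreFactorization

variable {A : Type*} [Ring A] {q Q E u v : A}

theorem ore_factorization_left (hq : ∀ a : A, Commute q a) (hEQ : E * Q = q * Q * E)
    (huQ : Commute Q u) (hvQ : Commute Q v) (hu : q ^ 3 * Q ^ 2 * u = u - 1) :
    q * Q * u * E ^ 2 + (u + v - 1) * E + q * Q * v = (q * Q * u * E + v) * (E + q * Q) := by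
  have hqQ : q * Q * (q ^ 2 * Q) = q ^ 3 * Q ^ 2 := by
    rw [mul_assoc, ← mul_assoc Q, ← ((hq Q).pow_left 2).eq, mul_assoc, ← mul_assoc,
      ← pow_succ', ← sq]
  have hcoeff : q * Q * u * (q ^ 2 * Q) = u - 1 := by
    rw [mul_assoc, (((hq u).pow_left 2).mul_left huQ).symm.eq, ← mul_assoc, hqQ, hu]
  have hE : E * (q * Q) = q ^ 2 * Q * E := by
    rw [← mul_assoc, ← (hq E).eq, mul_assoc, hEQ, ← mul_assoc, ← mul_assoc, ← sq]
  have hv : v * (q * Q) = q * Q * v := ((hq v).symm.mul_right hvQ.symm).eq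
  have h := linear_mul_linear_of_skew (a := q * Q * u) (b := v) (Commute.one_right E).eq hE
  rw [one_mul, mul_one, mul_one, hcoeff, hv] at h
  rw [h, sub_add_eq_add_sub]

theorem ore_factorization_right (hq : ∀ a : A, Commute q a) (hEQ : E * Q = q * Q * E)
    (huQ : Commute Q u) (hvQ : Commute Q v) (hv : q * Q ^ 2 * v = v - 1) :
    q * Q * u * E ^ 2 + (u + v - 1) * E + q * Q * v = (u * E + q * Q * v) * (1 + Q * E) := by
  have hu : u * (q * Q) = q * Q * u := ((hq u).symm.mul_right huQ.symm).eq
  have hcoeff : q * Q * v * Q = v - 1 := by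
    rw [mul_assoc, ← hvQ.eq, ← mul_assoc, mul_assoc q, ← sq, hv]
  have h := linear_mul_linear_of_skew (a := u) (b := q * Q * v) hEQ (Commute.one_right E).eq
  rw [add_comm (1 : A), h, mul_one, mul_one, hu, hcoeff, add_sub_assoc]

end OreFactorization

/-- in the Ore algebra `ℚ(q,Q)[E;σ]` with `EQ = qQE`, the operator
`X = (qQ/(1−q³Q²))E² + (1/(1−q³Q²) + 1/(1−qQ²) − 1)E + qQ/(1−qQ²)` admits the two
factorizations
`X = ((qQ/(1−q³Q²))E + 1/(1−qQ²))(E + qQ)` and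
`X = ((1/(1−q³Q²))E + qQ/(1−qQ²))(1 + QE)`.
We model the Ore algebra by a (noncommutative) ring containing central `q`,
an element `Q` and a skew variable `E` with `E·Q = q·Q·E`, where `1−q³Q²` and
`1−qQ²` are invertible. -/
theorem ore_factorization_X {A : Type*} [Ring A] (q Q E : A)
    (hq : ∀ a : A, q * a = a * q) (hEQ : E * Q = q * Q * E)
    [inst1 : Invertible (1 - q ^ 3 * Q ^ 2)] [inst2 : Invertible (1 - q * Q ^ 2)] :
    (q * Q * ⅟(1 - q ^ 3 * Q ^ 2) * E ^ 2 +
        (⅟(1 - q ^ 3 * Q ^ 2) + ⅟(1 - q * Q ^ 2) - 1) * E +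
        q * Q * ⅟(1 - q * Q ^ 2) =
      (q * Q * ⅟(1 - q ^ 3 * Q ^ 2) * E + ⅟(1 - q * Q ^ 2)) * (E + q * Q)) ∧
    (q * Q * ⅟(1 - q ^ 3 * Q ^ 2) * E ^ 2 +
        (⅟(1 - q ^ 3 * Q ^ 2) + ⅟(1 - q * Q ^ 2) - 1) * E +
        q * Q * ⅟(1 - q * Q ^ 2) =
      (⅟(1 - q ^ 3 * Q ^ 2) * E + q * Q * ⅟(1 - q * Q ^ 2)) * (1 + Q * E)) := by
  have hq' : ∀ a : A, Commute q a := hq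
  have hQ₁ : Commute Q (1 - q ^ 3 * Q ^ 2) :=
    (Commute.one_right Q).sub_right (((hq' Q).symm.pow_right 3).mul_right (Commute.self_pow Q 2))
  have hQ₂ : Commute Q (1 - q * Q ^ 2) :=
    (Commute.one_right Q).sub_right ((hq' Q).symm.mul_right (Commute.self_pow Q 2))
  exact ⟨ore_factorization_left hq' hEQ hQ₁.invOf_right hQ₂.invOf_right (mul_invOf_one_sub _),
    ore_factorization_right hq' hEQ hQ₁.invOf_right hQ₂.invOf_right (mul_invOf_one_sub _)⟩
end

section
/- The third-order annihilating operator of the colored Jones polynomial of the figure-eight knot factors as (E−1)·α(q,E,Q)·(Q−1) in the Ore algebra ℚ(q,Q)[E;σ], where α(q,E,Q) = (1/(1+qQ))[ (qQ/(1−q³Q²))E² + (1/(1−q³Q²) + 1/(1−qQ²) + qQ − 1 − 1/(qQ))E + qQ/(1−qQ²) ]. Explicitly, expanding this product in E gives the stated third-order operator with coefficients c₃ = q⁴Q(−1+q³Q)/((q+q³Q)(q−q⁶Q²)), c₀ = q⁵Q(−q³+q³Q)/((q²+q³Q)(−q⁵+q⁶Q²)), and the middle coefficients c₂, c₁ as in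 Garoufalidis' formula. -/
/-!
Expanding `(E - 1) * α * (Q - 1)` only needs the rule `E * f(Q) = f(qQ) * E`, i.e.
`SemiconjBy E (f Q) (f (q * Q))`: it holds for `Q` and the central `q` and passes to sums,
products and inverses. Writing `α = u * (a₂ E² + a₁ E + a₀)` and `σ` for `Q ↦ qQ`, the product is
`σ(u a₂)(q³Q - 1) E³ + (σ(u a₁) - u a₂)(q²Q - 1) E² + (σ(u a₀) - u a₁)(qQ - 1) E - u a₀ (Q - 1)`.

These coefficients lie in the double centralizer of `{q, Q}`, a commutative subring containing
the inverse of each of its elements invertible in the ring, so matching them with Garoufalidis'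
coefficients is an identity of rational functions. It is nontrivial only for `E²` and `E`: there
the poles at `1 - q³Q²` cancel by partial fractions, and the pole at `1 + q²Q` (resp. `1 + qQ`)
because the numerator of the remaining sum has that factor.
-/

theorem SemiconjBy.invOf_right {M : Type*} [Monoid M] {a x y : M} [Invertible x] [Invertible y]
    (h : SemiconjBy a x y) : SemiconjBy a (⅟x) (⅟y) :=
  calc a * ⅟x = ⅟y * (y * a) * ⅟x := by rw [invOf_mul_cancel_left]
    _ = ⅟y * a := by rw [← h.eq, mul_assoc ⅟y, mul_invOf_cancel_right]

theorem invOf_eq_invOf_mul_invOf {M : Type*} [CommMonoid M] {a b c : M} [Invertible a]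
    [Invertible b] [Invertible c] (h : c = a * b) : ⅟c = ⅟a * ⅟b := by
  subst h
  rw [invOf_mul, mul_comm]

theorem invOf_mul_invOf_sub_mul_invOf_mul_invOf {R : Type*} [CommRing R] {x y z t : R}
    [Invertible x] [Invertible y] [Invertible z] (h : x - t * y = z) :
    ⅟y * ⅟z - t * (⅟x * ⅟z) = ⅟x * ⅟y := by
  have hz : ⅟x * ⅟y * ⅟z * (x - t * y) = ⅟x * ⅟y := by rw [h, invOf_mul_cancel_right]
  linear_combination hz - ⅟y * ⅟z * mul_invOf_self x + t * ⅟x * ⅟z * mul_invOf_self y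

theorem semiconjBy_pow_mul_pow {M : Type*} [Monoid M] {q Q E : M} (hq : ∀ a, Commute q a)
    (hEQ : SemiconjBy E Q (q * Q)) (m n : ℕ) :
    SemiconjBy E (q ^ m * Q ^ n) (q ^ (m + n) * Q ^ n) := by
  have h := SemiconjBy.mul_right ((hq E).symm.pow_right m) (hEQ.pow_right n)
  rwa [(hq Q).mul_pow, ← mul_assoc, ← pow_add] at h

theorem cubic_eq_sub_one_mul_skew_quadratic_mul {A : Type*} [Ring A]
    {E u u' a₀ a₁ a₂ b₀ b₁ b₂ p₀ p₁ p₂ p₃ c₀ c₁ c₂ c₃ : A} (hu : SemiconjBy E u u')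
    (ha₀ : SemiconjBy E a₀ b₀) (ha₁ : SemiconjBy E a₁ b₁) (ha₂ : SemiconjBy E a₂ b₂)
    (hp₀ : SemiconjBy E p₀ p₁) (hp₁ : SemiconjBy E p₁ p₂) (hp₂ : SemiconjBy E p₂ p₃)
    (hc₃ : c₃ = u' * b₂ * p₃) (hc₂ : c₂ = (u' * b₁ - u * a₂) * p₂)
    (hc₁ : c₁ = (u * a₁ - u' * b₀) * p₁) (hc₀ : c₀ = -(u * a₀ * p₀)) :
    c₃ * E ^ 3 + c₂ * E ^ 2 - c₁ * E + c₀ = (E - 1) * (u * (a₂ * E ^ 2 + a₁ * E + a₀)) * p₀ := by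
  have hE₂ : E ^ 2 * p₀ = p₂ * E ^ 2 := by rw [sq]; exact hp₁.mul_left hp₀
  have hαp : u * (a₂ * E ^ 2 + a₁ * E + a₀) * p₀ =
      u * (a₂ * p₂) * E ^ 2 + u * (a₁ * p₁) * E + u * (a₀ * p₀) := by
    calc _ = u * (a₂ * (E ^ 2 * p₀) + a₁ * (E * p₀) + a₀ * p₀) := by noncomm_ring
      _ = _ := by rw [hE₂, hp₀.eq]; noncomm_ring
  rw [mul_assoc (E - 1), hαp, sub_mul, one_mul, mul_add, mul_add, ← mul_assoc E (u * (a₂ * p₂)),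
    ← mul_assoc E (u * (a₁ * p₁)), (hu.mul_right (ha₂.mul_right hp₂)).eq,
    (hu.mul_right (ha₁.mul_right hp₁)).eq, (hu.mul_right (ha₀.mul_right hp₀)).eq,
    hc₃, hc₂, hc₁, hc₀]
  noncomm_ring

abbrev Subring.centralizerInvertibleOfCoe {A : Type*} [Ring A] {s : Set A}
    (x : Subring.centralizer s) [Invertible (x : A)] : Invertible x where
  invOf := ⟨⅟(x : A), fun g hg => (Commute.invOf_right (x.2 g hg)).eq⟩
  invOf_mul_self := Subtype.ext (invOf_mul_self _)
  mul_invOf_self := Subtype.ext (mul_invOf_self _)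

abbrev Subring.centralizerCentralizerCommRingOfComm {A : Type*} [Ring A] {s : Set A}
    (hs : ∀ x ∈ s, ∀ y ∈ s, x * y = y * x) :
    CommRing (Subring.centralizer (Subring.centralizer s : Set A)) :=
  { (inferInstance : Ring _) with
    mul_comm := fun x y => Subtype.ext (Set.centralizer_centralizer_comm_of_comm hs _ x.2 _ y.2) }

section
variable {R : Type*} [CommRing R] (q Q : R)

theorem figureEight_partialFraction_one [Invertible q] [Invertible Q] [Invertible (1 + q ^ 2 * Q)]
    [Invertible (1 - q * Q ^ 2)] :
    ⅟(1 + q ^ 2 * Q) + ⅟(1 - q * Q ^ 2) + q * Q - 1 - ⅟q * ⅟Q =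
      -((1 + q * Q) * ((1 - 2 * q * Q + q ^ 2 * Q - q * Q ^ 2 + q ^ 2 * Q ^ 2 - q ^ 3 * Q ^ 2 +
        q ^ 2 * Q ^ 3 - 2 * q ^ 3 * Q ^ 3 + q ^ 4 * Q ^ 4) *
        ⅟q * ⅟Q * ⅟(1 + q ^ 2 * Q) * ⅟(1 - q * Q ^ 2))) := by
  grind [mul_invOf_self]

theorem figureEight_partialFraction_two [Invertible (q ^ 2 * Q)] [Invertible (1 + q * Q)]
    [Invertible (1 - q ^ 5 * Q ^ 2)] :
    ⅟(1 + q * Q) + ⅟(1 - q ^ 5 * Q ^ 2) + q ^ 2 * Q - 1 - ⅟(q ^ 2 * Q) =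
      -((1 + q ^ 2 * Q) * ((1 + q * Q - 2 * q ^ 2 * Q - q ^ 3 * Q ^ 2 + q ^ 4 * Q ^ 2 -
        q ^ 5 * Q ^ 2 - 2 * q ^ 6 * Q ^ 3 + q ^ 7 * Q ^ 3 + q ^ 8 * Q ^ 4) *
        ⅟(q ^ 2 * Q) * ⅟(1 + q * Q) * ⅟(1 - q ^ 5 * Q ^ 2))) := by
  grind [mul_invOf_self]

theorem figureEight_coeff_three [Invertible q] [Invertible (1 + q ^ 2 * Q)]
    [Invertible (1 - q ^ 5 * Q ^ 2)] [Invertible (q + q ^ 3 * Q)] [Invertible (q - q ^ 6 * Q ^ 2)] :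
    q ^ 4 * Q * (-1 + q ^ 3 * Q) * (⅟(q + q ^ 3 * Q) * ⅟(q - q ^ 6 * Q ^ 2)) =
      ⅟(1 + q ^ 2 * Q) * (q ^ 2 * Q * ⅟(1 - q ^ 5 * Q ^ 2)) * (q ^ 3 * Q - 1) := by
  rw [invOf_eq_invOf_mul_invOf (c := q + q ^ 3 * Q) (a := q) (b := 1 + q ^ 2 * Q) (by ring),
    invOf_eq_invOf_mul_invOf (c := q - q ^ 6 * Q ^ 2) (a := q) (b := 1 - q ^ 5 * Q ^ 2) (by ring)]
  have := mul_invOf_self q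
  grind

theorem figureEight_coeff_two [Invertible q] [Invertible Q] [Invertible (q ^ 2 * Q)]
    [Invertible (1 + q * Q)] [Invertible (1 + q ^ 2 * Q)] [Invertible (1 - q ^ 3 * Q ^ 2)]
    [Invertible (1 - q ^ 5 * Q ^ 2)]
    [Invertible (q ^ 2 + q ^ 3 * Q)] [Invertible (-q + q ^ 6 * Q ^ 2)] :
    (-q + q ^ 3 * Q) *
        (q ^ 4 + q ^ 5 * Q - 2 * q ^ 6 * Q - q ^ 7 * Q ^ 2 + q ^ 8 * Q ^ 2 -
          q ^ 9 * Q ^ 2 - 2 * q ^ 10 * Q ^ 3 + q ^ 11 * Q ^ 3 + q ^ 12 * Q ^ 4) *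
        ((⅟q) ^ 4 * ⅟Q * ⅟(q ^ 2 + q ^ 3 * Q) * ⅟(-q + q ^ 6 * Q ^ 2)) =
      (⅟(1 + q ^ 2 * Q) *
          (⅟(1 - q ^ 5 * Q ^ 2) + ⅟(1 - q ^ 3 * Q ^ 2) + q ^ 2 * Q - 1 - ⅟(q ^ 2 * Q)) -
        ⅟(1 + q * Q) * (q * Q * ⅟(1 - q ^ 3 * Q ^ 2))) * (q ^ 2 * Q - 1) := by
  have : Invertible (-q) := invertibleNeg q
  have hK := invOf_mul_invOf_sub_mul_invOf_mul_invOf (x := 1 + q * Q) (y := 1 + q ^ 2 * Q)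
    (z := 1 - q ^ 3 * Q ^ 2) (t := q * Q) (by ring)
  calc _ = -((q ^ 2 * Q - 1) * (1 + q * Q - 2 * q ^ 2 * Q - q ^ 3 * Q ^ 2 + q ^ 4 * Q ^ 2 -
        q ^ 5 * Q ^ 2 - 2 * q ^ 6 * Q ^ 3 + q ^ 7 * Q ^ 3 + q ^ 8 * Q ^ 4) *
        (⅟(q ^ 2 * Q) * ⅟(1 + q * Q) * ⅟(1 - q ^ 5 * Q ^ 2))) := by
        rw [invOf_eq_invOf_mul_invOf (c := q ^ 2 + q ^ 3 * Q) (a := q ^ 2) (b := 1 + q * Q)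
            (by ring),
          invOf_eq_invOf_mul_invOf (c := -q + q ^ 6 * Q ^ 2) (a := -q) (b := 1 - q ^ 5 * Q ^ 2)
            (by ring), invOf_eq_invOf_mul_invOf (c := q ^ 2 * Q) (a := q ^ 2) (b := Q) rfl,
          invOf_pow, invOf_neg]
        have := mul_invOf_self q
        grind
    _ = ⅟(1 + q ^ 2 * Q) * (⅟(1 + q * Q) + ⅟(1 - q ^ 5 * Q ^ 2) + q ^ 2 * Q - 1 - ⅟(q ^ 2 * Q)) *
        (q ^ 2 * Q - 1) := by
        rw [figureEight_partialFraction_two, mul_neg, invOf_mul_cancel_left]; ring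
    _ = _ := by linear_combination -(q ^ 2 * Q - 1) * hK

theorem figureEight_coeff_one [Invertible q] [Invertible Q] [Invertible (1 + q * Q)]
    [Invertible (1 + q ^ 2 * Q)] [Invertible (1 - q * Q ^ 2)] [Invertible (1 - q ^ 3 * Q ^ 2)]
    [Invertible (q + q ^ 3 * Q)] [Invertible (q ^ 5 - q ^ 6 * Q ^ 2)] :
    (q ^ 2 - q ^ 3 * Q) *
        (q ^ 8 - 2 * q ^ 9 * Q + q ^ 10 * Q - q ^ 9 * Q ^ 2 + q ^ 10 * Q ^ 2 -
          q ^ 11 * Q ^ 2 + q ^ 10 * Q ^ 3 - 2 * q ^ 11 * Q ^ 3 + q ^ 12 * Q ^ 4) *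
        ((⅟q) ^ 5 * ⅟Q * ⅟(q + q ^ 3 * Q) * ⅟(q ^ 5 - q ^ 6 * Q ^ 2)) =
      (⅟(1 + q * Q) * (⅟(1 - q ^ 3 * Q ^ 2) + ⅟(1 - q * Q ^ 2) + q * Q - 1 - ⅟q * ⅟Q) -
        ⅟(1 + q ^ 2 * Q) * (q ^ 2 * Q * ⅟(1 - q ^ 3 * Q ^ 2))) * (q * Q - 1) := by
  have hK := invOf_mul_invOf_sub_mul_invOf_mul_invOf (x := 1 + q ^ 2 * Q) (y := 1 + q * Q)
    (z := 1 - q ^ 3 * Q ^ 2) (t := q ^ 2 * Q) (by ring)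
  calc _ = -((q * Q - 1) * (1 - 2 * q * Q + q ^ 2 * Q - q * Q ^ 2 + q ^ 2 * Q ^ 2 - q ^ 3 * Q ^ 2 +
        q ^ 2 * Q ^ 3 - 2 * q ^ 3 * Q ^ 3 + q ^ 4 * Q ^ 4) *
        (⅟q * ⅟Q * ⅟(1 + q ^ 2 * Q) * ⅟(1 - q * Q ^ 2))) := by
        rw [invOf_eq_invOf_mul_invOf (c := q + q ^ 3 * Q) (a := q) (b := 1 + q ^ 2 * Q) (by ring),
          invOf_eq_invOf_mul_invOf (c := q ^ 5 - q ^ 6 * Q ^ 2) (a := q ^ 5) (b := 1 - q * Q ^ 2)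
            (by ring), invOf_pow]
        have := mul_invOf_self q
        grind
    _ = ⅟(1 + q * Q) * (⅟(1 + q ^ 2 * Q) + ⅟(1 - q * Q ^ 2) + q * Q - 1 - ⅟q * ⅟Q) *
        (q * Q - 1) := by
        rw [figureEight_partialFraction_one, mul_neg, invOf_mul_cancel_left]; ring
    _ = _ := by linear_combination -(q * Q - 1) * hK

theorem figureEight_coeff_zero [Invertible q] [Invertible (1 + q * Q)] [Invertible (1 - q * Q ^ 2)]
    [Invertible (q ^ 2 + q ^ 3 * Q)] [Invertible (-q ^ 5 + q ^ 6 * Q ^ 2)] :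
    q ^ 5 * Q * (-q ^ 3 + q ^ 3 * Q) * (⅟(q ^ 2 + q ^ 3 * Q) * ⅟(-q ^ 5 + q ^ 6 * Q ^ 2)) =
      -(⅟(1 + q * Q) * (q * Q * ⅟(1 - q * Q ^ 2)) * (Q - 1)) := by
  have : Invertible (-q ^ 5) := invertibleNeg (q ^ 5)
  rw [invOf_eq_invOf_mul_invOf (c := q ^ 2 + q ^ 3 * Q) (a := q ^ 2) (b := 1 + q * Q) (by ring),
    invOf_eq_invOf_mul_invOf (c := -q ^ 5 + q ^ 6 * Q ^ 2) (a := -q ^ 5) (b := 1 - q * Q ^ 2)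
      (by ring)]
  simp only [invOf_neg, invOf_pow]
  have := mul_invOf_self q
  grind

end

/-- the third-order annihilating operator of the colored Jones
polynomial of the figure-eight knot (Garoufalidis' explicit operator) factors as
`(E−1)·α(q,E,Q)·(Q−1)` in the Ore algebra `ℚ(q,Q)[E;σ]`, where
`α(q,E,Q) = (1/(1+qQ))[(qQ/(1−q³Q²))E² +
  (1/(1−q³Q²) + 1/(1−qQ²) + qQ − 1 − 1/(qQ))E + qQ/(1−qQ²)]`.
We model the Ore algebra by a (noncommutative) ring containing central `q`,
an element `Q` and a skew variable `E` with `E·Q = q·Q·E`, all the relevant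
denominators being invertible. -/
theorem figure_eight_annihilator_factorization {A : Type*} [Ring A] (q Q E : A)
    (hq : ∀ a : A, q * a = a * q) (hEQ : E * Q = q * Q * E)
    [iq : Invertible q] [iQ : Invertible Q]
    [i1 : Invertible (1 + q * Q)] [i2 : Invertible (1 - q ^ 3 * Q ^ 2)]
    [i3 : Invertible (1 - q * Q ^ 2)]
    [i4 : Invertible (q + q ^ 3 * Q)] [i5 : Invertible (q - q ^ 6 * Q ^ 2)]
    [i6 : Invertible (q ^ 2 + q ^ 3 * Q)] [i7 : Invertible (-q + q ^ 6 * Q ^ 2)]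
    [i8 : Invertible (q ^ 5 - q ^ 6 * Q ^ 2)] [i9 : Invertible (-q ^ 5 + q ^ 6 * Q ^ 2)] :
    q ^ 4 * Q * (-1 + q ^ 3 * Q) * (⅟(q + q ^ 3 * Q) * ⅟(q - q ^ 6 * Q ^ 2)) * E ^ 3 +
      (-q + q ^ 3 * Q) *
        (q ^ 4 + q ^ 5 * Q - 2 * q ^ 6 * Q - q ^ 7 * Q ^ 2 + q ^ 8 * Q ^ 2 -
          q ^ 9 * Q ^ 2 - 2 * q ^ 10 * Q ^ 3 + q ^ 11 * Q ^ 3 + q ^ 12 * Q ^ 4) *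
        ((⅟q) ^ 4 * ⅟Q * ⅟(q ^ 2 + q ^ 3 * Q) * ⅟(-q + q ^ 6 * Q ^ 2)) * E ^ 2 -
      (q ^ 2 - q ^ 3 * Q) *
        (q ^ 8 - 2 * q ^ 9 * Q + q ^ 10 * Q - q ^ 9 * Q ^ 2 + q ^ 10 * Q ^ 2 -
          q ^ 11 * Q ^ 2 + q ^ 10 * Q ^ 3 - 2 * q ^ 11 * Q ^ 3 + q ^ 12 * Q ^ 4) *
        ((⅟q) ^ 5 * ⅟Q * ⅟(q + q ^ 3 * Q) * ⅟(q ^ 5 - q ^ 6 * Q ^ 2)) * E +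
      q ^ 5 * Q * (-q ^ 3 + q ^ 3 * Q) *
        (⅟(q ^ 2 + q ^ 3 * Q) * ⅟(-q ^ 5 + q ^ 6 * Q ^ 2)) =
    (E - 1) *
      (⅟(1 + q * Q) *
        (q * Q * ⅟(1 - q ^ 3 * Q ^ 2) * E ^ 2 +
          (⅟(1 - q ^ 3 * Q ^ 2) + ⅟(1 - q * Q ^ 2) + q * Q - 1 - ⅟q * ⅟Q) * E +
          q * Q * ⅟(1 - q * Q ^ 2))) *
      (Q - 1) := by
  have : Invertible (1 + q ^ 2 * Q) :=
    @invertibleOfInvertibleMul _ _ q _ _ (i4.copy _ (by noncomm_ring))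
  have : Invertible (1 - q ^ 5 * Q ^ 2) :=
    @invertibleOfInvertibleMul _ _ q _ _ (i5.copy _ (by noncomm_ring))
  have : Invertible (q ^ 2 * Q) := invertibleMul _ _
  have σ := semiconjBy_pow_mul_pow hq hEQ
  have s₁ : SemiconjBy E (1 + q * Q) (1 + q ^ 2 * Q) := by
    simpa using (SemiconjBy.one_right E).add_right (σ 1 1)
  have s₂ : SemiconjBy E (1 - q * Q ^ 2) (1 - q ^ 3 * Q ^ 2) := by
    simpa using (SemiconjBy.one_right E).sub_right (σ 1 2)
  have s₃ : SemiconjBy E (1 - q ^ 3 * Q ^ 2) (1 - q ^ 5 * Q ^ 2) := by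
    simpa using (SemiconjBy.one_right E).sub_right (σ 3 2)
  have s₄ : SemiconjBy E (q * Q) (q ^ 2 * Q) := by simpa using σ 1 1
  have s₅ : SemiconjBy E (q ^ 2 * Q) (q ^ 3 * Q) := by simpa using σ 2 1
  have s₆ : SemiconjBy E (⅟q * ⅟Q) ⅟(q ^ 2 * Q) := by
    have := invertibleMul q Q
    rw [(Commute.invOf_left (hq ⅟Q)).eq, ← invOf_mul]
    exact s₄.invOf_right
  let S := Subring.centralizer (Subring.centralizer {q, Q} : Set A)
  let : CommRing S := Subring.centralizerCentralizerCommRingOfComm (s := {q, Q}) (by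
    rintro x (rfl | rfl) y (rfl | rfl) <;> first | rfl | exact hq _ | exact (hq _).symm)
  let (x : S) [Invertible (x : A)] : Invertible x := Subring.centralizerInvertibleOfCoe x
  let qS : S := ⟨q, Set.subset_centralizer_centralizer (by simp)⟩
  let QS : S := ⟨Q, Set.subset_centralizer_centralizer (by simp)⟩
  exact cubic_eq_sub_one_mul_skew_quadratic_mul s₁.invOf_right (s₄.mul_right s₂.invOf_right)
    ((((s₃.invOf_right.add_right s₂.invOf_right).add_right s₄).sub_right
      (.one_right E)).sub_right s₆) (s₄.mul_right s₃.invOf_right)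
    (SemiconjBy.sub_right hEQ (.one_right E)) (s₄.sub_right (.one_right E))
    (s₅.sub_right (.one_right E))
    (congrArg Subtype.val (figureEight_coeff_three qS QS))
    (congrArg Subtype.val (figureEight_coeff_two qS QS))
    (congrArg Subtype.val (figureEight_coeff_one qS QS))
    (congrArg Subtype.val (figureEight_coeff_zero qS QS))
end

section
/- Let F(n,i) be the figure-eight knot summand and G(n,i) = R(E,Q)F where R(E,Q) = [ (qQ/(1−q³Q²))E² + (1/(1−q³Q²) + 1/(1−qQ²) − 1)E + qQ/(1−qQ²) ](Q−1) acting with Q = qⁿ. Then the telescoping sum Σ_{i=0}^{n+1} (G(n,i+1) − G(n,i)) = G(n,n+2) − G(n,0) equals q^{n+1} + 1. -/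
/-- The quantum integer `{k} = v^k - v^{-k}` where `v = q^{1/2}`. -/
noncomputable def qint {K : Type*} [Field K] (v : K) (k : ℤ) : K := v ^ k - v ^ (-k)

/-- The quantum factorial `{n}! = {1}{2}⋯{n}`. -/
noncomputable def qfac {K : Type*} [Field K] (v : K) (n : ℕ) : K :=
  ∏ j ∈ Finset.range n, qint v ((j : ℤ) + 1)

/-- The figure-eight knot summand `F(n,i) = (1/{n}) · {n+i}!/{n-i-1}!`,
extended by `0` for `i ≥ n`. -/
noncomputable def F41 {K : Type*} [Field K] (v : K) (n i : ℕ) : K :=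
  if i < n then qfac v (n + i) / (qint v (n : ℤ) * qfac v (n - i - 1)) else 0

/-- `G(n,i) = (R(E,Q)F)(n,i)` where
`R(E,Q) = [(qQ/(1−q³Q²))E² + (1/(1−q³Q²) + 1/(1−qQ²) − 1)E + qQ/(1−qQ²)](Q−1)`,
acting with `(QF)(n,i) = qⁿ F(n,i)` and `(EF)(n,i) = F(n+1,i)`, `q = v²`. -/
noncomputable def G41 {K : Type*} [Field K] (v : K) (n i : ℕ) : K :=
  let q := v ^ 2
  q * q ^ n / (1 - q ^ 3 * (q ^ n) ^ 2) * ((q ^ (n + 2) - 1) * F41 v (n + 2) i) +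
    (1 / (1 - q ^ 3 * (q ^ n) ^ 2) + 1 / (1 - q * (q ^ n) ^ 2) - 1) *
      ((q ^ (n + 1) - 1) * F41 v (n + 1) i) +
    q * q ^ n / (1 - q * (q ^ n) ^ 2) * ((q ^ n - 1) * F41 v n i)

/-! `F(m,i)` vanishes for `i ≥ m`, so the sum telescopes to `-G(n,0)`. Since `F(m,0) = 1` for
`m ≥ 1`, `-G(n,0)` is a rational function of `q` and `Q = qⁿ` which, grouped by denominator,
equals `qQ + 1`. -/

theorem qfac_succ {K : Type*} [Field K] (v : K) (n : ℕ) :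
    qfac v (n + 1) = qfac v n * qint v ((n + 1 : ℕ) : ℤ) := by
  rw [qfac, Finset.prod_range_succ, ← qfac]
  push_cast
  rfl

theorem qfac_ne_zero {K : Type*} [Field K] {v : K}
    (hqint : ∀ k : ℕ, 1 ≤ k → qint v (k : ℤ) ≠ 0) (n : ℕ) : qfac v n ≠ 0 :=
  Finset.prod_ne_zero_iff.2 fun j _ => by exact_mod_cast hqint (j + 1) (Nat.le_add_left 1 j)

theorem F41_of_le {K : Type*} [Field K] (v : K) {n i : ℕ} (h : n ≤ i) : F41 v n i = 0 :=
  if_neg h.not_gt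

theorem F41_zero {K : Type*} [Field K] {v : K}
    (hqint : ∀ k : ℕ, 1 ≤ k → qint v (k : ℤ) ≠ 0) {n : ℕ} (hn : 0 < n) : F41 v n 0 = 1 := by
  obtain ⟨m, rfl⟩ := Nat.exists_eq_add_of_lt hn
  rw [F41, if_pos hn, show 0 + m + 1 + 0 = m + 1 by omega, show m + 1 - 0 - 1 = m by omega,
    qfac_succ, mul_comm]
  exact div_self (mul_ne_zero (hqint _ (Nat.le_add_left 1 m)) (qfac_ne_zero hqint m))

/-- Also true at `n = 0`, where `F(0,0) = 0`: there the factor `Q - 1` of `R(E,Q)` vanishes. -/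
theorem pow_sub_one_mul_F41_zero {K : Type*} [Field K] {v : K}
    (hqint : ∀ k : ℕ, 1 ≤ k → qint v (k : ℤ) ≠ 0) (x : K) (n : ℕ) :
    (x ^ n - 1) * F41 v n 0 = x ^ n - 1 := by
  rcases n.eq_zero_or_pos with rfl | hn
  · simp
  · rw [F41_zero hqint hn, mul_one]

theorem G41_of_le {K : Type*} [Field K] (v : K) {n i : ℕ} (h : n + 2 ≤ i) : G41 v n i = 0 := by
  simp [G41, F41_of_le v h, F41_of_le v (show n + 1 ≤ i by omega),
    F41_of_le v (show n ≤ i by omega)]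

/-- Each of the two fractions of `R(E,Q)` evaluated at `F(·,0) = 1` collapses to `-1`. -/
theorem figure_eight_coefficient_sum {K : Type*} [Field K] {q Q : K}
    (hd1 : 1 - q ^ 3 * Q ^ 2 ≠ 0) (hd2 : 1 - q * Q ^ 2 ≠ 0) :
    q * Q / (1 - q ^ 3 * Q ^ 2) * (q ^ 2 * Q - 1) +
        (1 / (1 - q ^ 3 * Q ^ 2) + 1 / (1 - q * Q ^ 2) - 1) * (q * Q - 1) +
        q * Q / (1 - q * Q ^ 2) * (Q - 1) = -(q * Q + 1) := by
  have h1 : (q * Q * (q ^ 2 * Q - 1) + (q * Q - 1)) / (1 - q ^ 3 * Q ^ 2) = -1 := by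
    rw [div_eq_iff hd1]; ring
  have h2 : ((q * Q - 1) + q * Q * (Q - 1)) / (1 - q * Q ^ 2) = -1 := by
    rw [div_eq_iff hd2]; ring
  linear_combination h1 + h2

theorem G41_zero {K : Type*} [Field K] {v q : K} (hq : q = v ^ 2) {n : ℕ}
    (hqint : ∀ k : ℕ, 1 ≤ k → qint v (k : ℤ) ≠ 0)
    (hd1 : 1 - q ^ 3 * (q ^ n) ^ 2 ≠ 0) (hd2 : 1 - q * (q ^ n) ^ 2 ≠ 0) :
    G41 v n 0 = -(q ^ (n + 1) + 1) := by
  subst hq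
  simp only [G41, F41_zero hqint (show 0 < n + 2 by omega), F41_zero hqint n.succ_pos,
    pow_sub_one_mul_F41_zero hqint, mul_one]
  linear_combination figure_eight_coefficient_sum hd1 hd2

theorem figure_eight_telescoping_sum_general {K : Type*} [Field K] (v q : K)
    (hq : q = v ^ 2) (n : ℕ)
    (hqint : ∀ k : ℕ, 1 ≤ k → qint v (k : ℤ) ≠ 0)
    (hd1 : 1 - q ^ 3 * (q ^ n) ^ 2 ≠ 0) (hd2 : 1 - q * (q ^ n) ^ 2 ≠ 0) :
    (∑ i ∈ Finset.range (n + 2), (G41 v n (i + 1) - G41 v n i)) =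
        G41 v n (n + 2) - G41 v n 0 ∧
      G41 v n (n + 2) - G41 v n 0 = q ^ (n + 1) + 1 := by
  refine ⟨Finset.sum_range_sub (G41 v n) (n + 2), ?_⟩
  rw [G41_of_le v le_rfl, G41_zero hq hqint hd1 hd2]
  ring

/-- the telescoping sum `∑_{i=0}^{n+1} (G(n,i+1) − G(n,i))`
equals `G(n,n+2) − G(n,0)`, which equals `q^{n+1} + 1`. -/
theorem figure_eight_telescoping_sum {K : Type*} [Field K] (v q : K)
    (hv : v ≠ 0) (hq : q = v ^ 2) (n : ℕ)
    (hqint : ∀ k : ℕ, 1 ≤ k → qint v (k : ℤ) ≠ 0)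
    (hd1 : 1 - q ^ 3 * (q ^ n) ^ 2 ≠ 0) (hd2 : 1 - q * (q ^ n) ^ 2 ≠ 0) :
    (∑ i ∈ Finset.range (n + 2), (G41 v n (i + 1) - G41 v n i)) =
        G41 v n (n + 2) - G41 v n 0 ∧
      G41 v n (n + 2) - G41 v n 0 = q ^ (n + 1) + 1 :=
  figure_eight_telescoping_sum_general v q hq n hqint hd1 hd2
end

section
/- In the Ore algebra ℚ(q)[Q^{±1}, Q₁^{±1}][E, Ẽ₁] with relations EQ = qQE, Ẽ₁Q₁ = qQ₁Ẽ₁, EQ₁ = Q₁E, Ẽ₁Q = QẼ₁, EẼ₁ = Ẽ₁E: the left ideal generated by (E+qQ)Q₁(Q−1) − (1+QE)(Q−1) and q²Q₁²Q + qQ₁(−Q² + QẼ₁ − 1) + Q contains the Q₁-free element P(E,Q,Ẽ₁) = [ (qQ/(1−q³Q²))Ẽ₁E² + (Ẽ₁/(1−q³Q²) + Ẽ₁/(1−qQ²) + qQ − Ẽ₁ − 1/(qQ))E + (qQ/(1−qQ²))Ẽ₁ ](Q−1). -/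
/-!
Write `R = (E + qQ)Q₁ - (1 + QE)` and `G` for the second generator, so that the first generator
is `R(Q - 1)`. Since `G` only involves `q, Q, Q₁, E₁`, it commutes with `Q`, and
`P = aR + bG` gives `P(Q - 1) = a·R(Q - 1) + (b(Q - 1))·G`; so it suffices to put `P` itself
into the left ideal generated by `R` and `G`. Over the common denominator `qQ(1 - q³Q²)(1 - qQ²)`
the numerator `N` of `P` is a polynomial, and `qN = a₀R + b₀G` for explicit polynomials `a₀, b₀`,
an identity checked by normal ordering the monomials.
-/

section

variable {A : Type*} [Ring A]

theorem exists_mul_eq_of_mem_span_pair_of_commute {r g c x : A} (hgc : Commute g c)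
    (hx : x ∈ Ideal.span {r, g}) : ∃ a b : A, x * c = a * (r * c) + b * g := by
  obtain ⟨a, b, rfl⟩ := Ideal.mem_span_pair.mp hx
  exact ⟨a, b * c, by rw [add_mul, mul_assoc, mul_assoc, mul_assoc, hgc.eq]⟩

theorem invOf_mul_add_invOf_mul_add_invOf_mul {a b c : A} [Invertible a] [Invertible b]
    [Invertible c] (hab : Commute a b) (hac : Commute a c) (hbc : Commute b c) (x y z : A) :
    ⅟a * x + ⅟b * y + ⅟c * z = ⅟c * ⅟b * ⅟a * (b * c * x + a * c * y + a * b * z) := by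
  simp only [mul_add, mul_assoc, hab.invOf_left.left_comm, hac.invOf_left.left_comm,
    hbc.invOf_left.left_comm, invOf_mul_cancel_left]

theorem figureEight_operator_eq_partialFractions {q Q d₂ d₃ E E₁ : A} [Invertible q]
    [Invertible Q] [Invertible (q * Q)] [Invertible d₂] [Invertible d₃] (hqQ : Commute q Q)
    (h₂ : Commute d₂ (q * Q)) (h₃ : Commute d₃ (q * Q)) :
    q * Q * ⅟d₂ * E₁ * E ^ 2 + (⅟d₂ * E₁ + ⅟d₃ * E₁ + q * Q - E₁ - ⅟q * ⅟Q) * E +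
        q * Q * ⅟d₃ * E₁ =
      ⅟d₂ * (q * Q * E₁ * E ^ 2 + E₁ * E) + ⅟d₃ * (E₁ * E + q * Q * E₁) +
        ⅟(q * Q) * ((q * Q * (q * Q - E₁) - 1) * E) := by
  have hinv : ⅟(q * Q) * ((q * Q * (q * Q - E₁) - 1) * E) = (q * Q - E₁ - ⅟q * ⅟Q) * E := by
    rw [← mul_assoc, mul_sub, mul_one, ← mul_assoc, invOf_mul_self, one_mul, invOf_mul,
      hqQ.invOf_left.invOf_right.eq]
  rw [h₂.symm.invOf_right.eq, h₃.symm.invOf_right.eq, hinv]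
  noncomm_ring

theorem q_mul_figureEight_numerator_mem_span {q Q Q₁ E E₁ : A} (hq : ∀ a : A, Commute q a)
    (hQQ₁ : Commute Q Q₁) (hEQ : E * Q = q * Q * E) (hE₁Q₁ : E₁ * Q₁ = q * Q₁ * E₁)
    (hEQ₁ : Commute E Q₁) (hE₁Q : Commute E₁ Q) (hEE₁ : Commute E E₁) :
    q * ((1 - q * Q ^ 2) * (q * Q) * (q * Q * E₁ * E ^ 2 + E₁ * E) +
        (1 - q ^ 3 * Q ^ 2) * (q * Q) * (E₁ * E + q * Q * E₁) +
        (1 - q ^ 3 * Q ^ 2) * (1 - q * Q ^ 2) * ((q * Q * (q * Q - E₁) - 1) * E)) ∈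
      Ideal.span {(E + q * Q) * Q₁ - (1 + Q * E),
        q ^ 2 * Q₁ ^ 2 * Q + q * Q₁ * (-Q ^ 2 + Q * E₁ - 1) + Q} := by
  have skew {a b c : A} (h : a * b = c * b * a) (t : A) : a * (b * t) = c * (b * (a * t)) := by
    rw [← mul_assoc, h, mul_assoc, mul_assoc]
  refine Ideal.mem_span_pair.mpr
    ⟨q * ((1 - q * Q ^ 2) * (1 - q ^ 3 * Q * Q₁) * E - q * Q * (1 - q * Q ^ 2) * E * E₁ -
        q ^ 3 * Q ^ 2 * (1 - q ^ 3 * Q ^ 2) * (q * Q₁ - Q) -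
        q ^ 2 * Q ^ 2 * (1 - q ^ 3 * Q ^ 2) * E₁),
      (1 - q * Q ^ 2) * E ^ 2 + q ^ 2 * (1 + q) * Q * (1 - q ^ 2 * Q ^ 2) * E +
        q ^ 4 * Q ^ 2 * (1 - q ^ 3 * Q ^ 2), ?_⟩
  -- Normal order `q < Q < Q₁ < E < E₁`. Right multiplication by `1` makes every monomial end
  -- in `* 1`, so only the forms `x * (y * t) = …` of the relations are needed.
  refine (mul_one _).symm.trans (Eq.trans ?_ (mul_one _))
  simp only [pow_succ, pow_zero, one_mul, mul_add, add_mul, mul_sub, sub_mul, mul_neg, neg_mul,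
    mul_assoc, (hq Q).symm.left_comm, (hq Q₁).symm.left_comm, (hq E).symm.left_comm,
    (hq E₁).symm.left_comm, hQQ₁.symm.left_comm, hEQ₁.left_comm, hE₁Q.left_comm,
    hEE₁.symm.left_comm, skew hEQ, skew hE₁Q₁]
  abel

end

theorem figure_eight_left_ideal_membership_general {A : Type*} [Ring A]
    (q Q Q₁ E E₁ : A)
    (hq : ∀ a : A, q * a = a * q)
    (hQQ₁ : Q * Q₁ = Q₁ * Q)
    (hEQ : E * Q = q * Q * E) (hE₁Q₁ : E₁ * Q₁ = q * Q₁ * E₁)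
    (hEQ₁ : E * Q₁ = Q₁ * E) (hE₁Q : E₁ * Q = Q * E₁)
    (hEE₁ : E * E₁ = E₁ * E)
    [iq : Invertible q] [iQ : Invertible Q]
    [i2 : Invertible (1 - q ^ 3 * Q ^ 2)] [i3 : Invertible (1 - q * Q ^ 2)] :
    ∃ a b : A,
      (q * Q * ⅟(1 - q ^ 3 * Q ^ 2) * E₁ * E ^ 2 +
          (⅟(1 - q ^ 3 * Q ^ 2) * E₁ + ⅟(1 - q * Q ^ 2) * E₁ + q * Q - E₁ -
            ⅟q * ⅟Q) * E +
          q * Q * ⅟(1 - q * Q ^ 2) * E₁) * (Q - 1) =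
        a * ((E + q * Q) * Q₁ * (Q - 1) - (1 + Q * E) * (Q - 1)) +
          b * (q ^ 2 * Q₁ ^ 2 * Q + q * Q₁ * (-Q ^ 2 + Q * E₁ - 1) + Q) := by
  let := invertibleMul q Q
  obtain ⟨h₂, h₃, h₂₃⟩ : Commute (1 - q ^ 3 * Q ^ 2) (q * Q) ∧ Commute (1 - q * Q ^ 2) (q * Q) ∧
      Commute (1 - q ^ 3 * Q ^ 2) (1 - q * Q ^ 2) := by
    refine ⟨?_, ?_, ?_⟩ <;>
      apply_rules [Commute.sub_left, Commute.mul_left, Commute.pow_left, Commute.one_left,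
        Commute.sub_right, Commute.mul_right, Commute.pow_right, Commute.one_right, Commute.refl,
        hq, (hq Q).symm]
  have hN := Ideal.mul_mem_left _ (⅟q)
    (q_mul_figureEight_numerator_mem_span hq hQQ₁ hEQ hE₁Q₁ hEQ₁ hE₁Q hEE₁)
  rw [invOf_mul_cancel_left] at hN
  rw [← sub_mul]
  refine exists_mul_eq_of_mem_span_pair_of_commute ?_ ?_
  · apply_rules [Commute.add_left, Commute.mul_left, Commute.pow_left, Commute.neg_left,
      Commute.sub_left, Commute.one_left, Commute.sub_right, Commute.one_right, Commute.refl,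
      (hq Q).symm, hQQ₁.symm, hE₁Q]
  · rw [figureEight_operator_eq_partialFractions (hq Q) h₂ h₃,
      invOf_mul_add_invOf_mul_add_invOf_mul h₂₃ h₂ h₃]
    exact Ideal.mul_mem_left _ _ hN

/-- in the Ore algebra `ℚ(q)[Q^{±1},Q₁^{±1}][E,Ẽ₁]` with relations
`EQ = qQE`, `Ẽ₁Q₁ = qQ₁Ẽ₁`, `EQ₁ = Q₁E`, `Ẽ₁Q = QẼ₁`, `EẼ₁ = Ẽ₁E`, the left ideal
generated by `(E+qQ)Q₁(Q−1) − (1+QE)(Q−1)` and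
`q²Q₁²Q + qQ₁(−Q² + QẼ₁ − 1) + Q` contains the `Q₁`-free element
`P(E,Q,Ẽ₁) = [(qQ/(1−q³Q²))Ẽ₁E² + (Ẽ₁/(1−q³Q²) + Ẽ₁/(1−qQ²) + qQ − Ẽ₁ − 1/(qQ))E
  + (qQ/(1−qQ²))Ẽ₁](Q−1)`.
We model the Ore algebra by a (noncommutative) ring containing central `q`,
commuting elements `Q, Q₁` and shift operators `E, Ẽ₁` with the stated
relations, the relevant denominators being invertible. -/
theorem figure_eight_left_ideal_membership {A : Type*} [Ring A]
    (q Q Q₁ E E₁ : A)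
    (hq : ∀ a : A, q * a = a * q)
    (hQQ₁ : Q * Q₁ = Q₁ * Q)
    (hEQ : E * Q = q * Q * E) (hE₁Q₁ : E₁ * Q₁ = q * Q₁ * E₁)
    (hEQ₁ : E * Q₁ = Q₁ * E) (hE₁Q : E₁ * Q = Q * E₁)
    (hEE₁ : E * E₁ = E₁ * E)
    [iq : Invertible q] [iQ : Invertible Q] [iQ₁ : Invertible Q₁]
    [i2 : Invertible (1 - q ^ 3 * Q ^ 2)] [i3 : Invertible (1 - q * Q ^ 2)] :
    ∃ a b : A,
      (q * Q * ⅟(1 - q ^ 3 * Q ^ 2) * E₁ * E ^ 2 +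
          (⅟(1 - q ^ 3 * Q ^ 2) * E₁ + ⅟(1 - q * Q ^ 2) * E₁ + q * Q - E₁ -
            ⅟q * ⅟Q) * E +
          q * Q * ⅟(1 - q * Q ^ 2) * E₁) * (Q - 1) =
        a * ((E + q * Q) * Q₁ * (Q - 1) - (1 + Q * E) * (Q - 1)) +
          b * (q ^ 2 * Q₁ ^ 2 * Q + q * Q₁ * (-Q ^ 2 + Q * E₁ - 1) + Q) :=
  figure_eight_left_ideal_membership_general q Q Q₁ E E₁ hq hQQ₁ hEQ hE₁Q₁ hEQ₁ hE₁Q hEE₁ (iq := iq)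
    (iQ := iQ) (i2 := i2) (i3 := i3)
end
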